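/- arXiv:2603.03349 — 2 statements merged into one kernel-verified Lean document; each statement's English description precedes it below -/
import Mathlib

section
/- For every λ > 1, the polynomial Ψ(ρ) = λρ⁴ + (2λ − 1)ρ³ + λρ² + 2ρ − 1 is strictly increasing on (0, 1) and has a unique root in the interval (0, (√5 − 1)/2), with Ψ(0) = −1 < 0 and Ψ((√5−1)/2) = λ > 0. -/
/-!
For `λ ≥ 1/2`, Ψ is a sum of monomials with nonnegative coefficients plus the strictly
increasing `2ρ`, hence strictly increasing on `[0, ∞)`. The endpoint `(√5 - 1)/2 = -ψ` satisfies
`ρ² = 1 - ρ`, which collapses `Ψ(-ψ)` to `λ`; a sign change of a strictly increasing continuous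
function gives exactly one root.
-/

open Set Real
open scoped goldenRatio

theorem existsUnique_mem_Ioo_eq_of_strictMonoOn {α δ : Type*}
    [ConditionallyCompleteLinearOrder α] [TopologicalSpace α] [OrderTopology α] [DenselyOrdered α]
    [LinearOrder δ] [TopologicalSpace δ] [OrderClosedTopology δ] {f : α → δ} {a b : α} {y : δ}
    (hab : a ≤ b) (hf : ContinuousOn f (Icc a b)) (hmono : StrictMonoOn f (Ioo a b))
    (hy : y ∈ Ioo (f a) (f b)) :
    ∃! x, x ∈ Ioo a b ∧ f x = y := by
  obtain ⟨x, hx, hfx⟩ := intermediate_value_Ioo hab hf hy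
  exact ⟨x, ⟨hx, hfx⟩, fun z ⟨hz, hfz⟩ => hmono.injOn hz hx (hfz.trans hfx.symm)⟩

namespace Psi

def psi (l ρ : ℝ) : ℝ := l*ρ^4 + (2*l - 1)*ρ^3 + l*ρ^2 + 2*ρ - 1

variable {l : ℝ}

theorem psi_zero (l : ℝ) : psi l 0 = -1 := by norm_num [psi]

theorem psi_neg_goldenConj (l : ℝ) : psi l (-ψ) = l := by
  unfold psi
  linear_combination (l * ψ ^ 2 - (l - 1) * ψ + (l + 1)) * goldenConj_sq

theorem continuous_psi (l : ℝ) : Continuous (psi l) := by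
  unfold psi; fun_prop

theorem psi_strictMonoOn (hl : 1/2 ≤ l) : StrictMonoOn (psi l) (Ici 0) := by
  intro x (hx : 0 ≤ x) y _ hxy
  have h4 := mul_le_mul_of_nonneg_left (pow_le_pow_left₀ hx hxy.le 4) (by linarith : 0 ≤ l)
  have h3 :=
    mul_le_mul_of_nonneg_left (pow_le_pow_left₀ hx hxy.le 3) (by linarith : 0 ≤ 2*l - 1)
  have h2 := mul_le_mul_of_nonneg_left (pow_le_pow_left₀ hx hxy.le 2) (by linarith : 0 ≤ l)
  unfold psi
  linarith

theorem existsUnique_psi_eq_zero (hl : 1/2 ≤ l) :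
    ∃! ρ, ρ ∈ Ioo 0 (-ψ) ∧ psi l ρ = 0 := by
  refine existsUnique_mem_Ioo_eq_of_strictMonoOn (neg_nonneg.2 goldenConj_neg.le)
    (continuous_psi l).continuousOn ((psi_strictMonoOn hl).mono fun _ h => le_of_lt h.1) ?_
  rw [psi_zero, psi_neg_goldenConj]
  constructor <;> linarith

end Psi

open Psi in
theorem stmt_7 (l : ℝ) (hl : 1 < l) :
    StrictMonoOn (fun ρ : ℝ => l*ρ^4 + (2*l - 1)*ρ^3 + l*ρ^2 + 2*ρ - 1)
      (Set.Ioo 0 1) ∧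
    (∃! ρ : ℝ, ρ ∈ Set.Ioo 0 ((Real.sqrt 5 - 1)/2) ∧
      l*ρ^4 + (2*l - 1)*ρ^3 + l*ρ^2 + 2*ρ - 1 = 0) ∧
    (l*(0:ℝ)^4 + (2*l - 1)*(0:ℝ)^3 + l*(0:ℝ)^2 + 2*(0:ℝ) - 1 = -1) ∧ (-1:ℝ) < 0 ∧
    (l*((Real.sqrt 5 - 1)/2)^4 + (2*l - 1)*((Real.sqrt 5 - 1)/2)^3
      + l*((Real.sqrt 5 - 1)/2)^2 + 2*((Real.sqrt 5 - 1)/2) - 1 = l) ∧ 0 < l := by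
  have hl' : 1/2 ≤ l := by linarith
  have hc : (Real.sqrt 5 - 1) / 2 = -ψ := by rw [goldenConj]; ring
  rw [hc]
  exact ⟨(psi_strictMonoOn hl').mono fun _ h => le_of_lt h.1, existsUnique_psi_eq_zero hl',
    psi_zero l, neg_one_lt_zero, psi_neg_goldenConj l, by linarith⟩
end

section
/- Let a ∈ [0, 1), t ∈ [0, 1], and ρ ∈ [0, 1). If ρ satisfies (4t − 3)ρ² − 2ρ + 1 < 0, then there exists a ∈ [0, 1) such that 2ρ²(1 − t)a² − ((2t − 1)ρ² − ρ)a + ρ − 1 > 0. -/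
open Set Filter Topology

theorem exists_mem_Ico_pos_of_continuousWithinAt {f : ℝ → ℝ} {b c : ℝ} (hbc : b < c)
    (hf : ContinuousWithinAt f (Iio c) c) (hc : 0 < f c) : ∃ a ∈ Ico b c, 0 < f a := by
  have hpos : ∀ᶠ a in 𝓝[<] c, 0 < f a := hf.eventually (lt_mem_nhds hc)
  have hmem : ∀ᶠ a in 𝓝[<] c, a ∈ Ico b c :=
    mem_of_superset (Ioo_mem_nhdsLT hbc) Ioo_subset_Ico_self
  exact (hmem.and hpos).exists

theorem stmt_11_general (t ρ : ℝ)
    (h : (4*t - 3)*ρ^2 - 2*ρ + 1 < 0) :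
    ∃ a ∈ Set.Ico (0:ℝ) 1,
      0 < 2*ρ^2*(1 - t)*a^2 - ((2*t - 1)*ρ^2 - ρ)*a + ρ - 1 := by
  refine exists_mem_Ico_pos_of_continuousWithinAt zero_lt_one
    (Continuous.continuousWithinAt (by fun_prop)) ?_
  linear_combination h

theorem stmt_11 (t ρ : ℝ) (ht : t ∈ Set.Icc (0:ℝ) 1) (hρ : ρ ∈ Set.Ico (0:ℝ) 1)
    (h : (4*t - 3)*ρ^2 - 2*ρ + 1 < 0) :
    ∃ a ∈ Set.Ico (0:ℝ) 1,
      0 < 2*ρ^2*(1 - t)*a^2 - ((2*t - 1)*ρ^2 - ρ)*a + ρ - 1 :=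
  stmt_11_general t ρ h
end
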